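/- arXiv:2209.10046 — 3 statements merged into one kernel-verified Lean document; each statement's English description precedes it below -/
import Mathlib

section
/- Let c > 0 and T > 0. The following are equivalent: (1) μ_N(D_x f(t, x, u)) ≤ −c for all t ∈ [0,T], x ∈ ℝⁿ, and u ∈ U (the system ẋ = f(t,x,u) is strongly infinitesimally contracting with rate c with respect to N); (2) for every choice of nominal trajectory x : [0,T] → ℝⁿ and input u : [0,T] → U, the time-reversed adjoint system Λ̇(t) = D_x f(T−t, x(T−t), u(T−t))ᵀ Λ(t) − v(T−t), obtained from the adjoint λ̇(t) = −D_x f(t, x(t), u(t))ᵀ λ(t) − v(t) by setting Λ(t) = λ(T−t), satisfies μ_{N⋆}(D_Λ(vector field)) ≤ −c at every time, i.e., is strongly infinitesimally contracting with rate c with respect to the dual norm N⋆. -/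
open Set Filter Matrix MeasureTheory intervalIntegral Topology

/-- `N` is a norm on `ℝ^m`. -/
structure IsNorm {m : ℕ} (N : (Fin m → ℝ) → ℝ) : Prop where
  nonneg : ∀ x, 0 ≤ N x
  eq_zero_iff : ∀ x, N x = 0 ↔ x = 0
  smul : ∀ (a : ℝ) (x : Fin m → ℝ), N (a • x) = |a| * N x
  triangle : ∀ x y, N (x + y) ≤ N x + N y

/-- The dual norm `N⋆(y) = sup {yᵀx : N x ≤ 1}`. -/
noncomputable def dualNorm {m : ℕ} (N : (Fin m → ℝ) → ℝ) (y : Fin m → ℝ) : ℝ :=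
  sSup {r | ∃ x, N x ≤ 1 ∧ r = y ⬝ᵥ x}

/-- The induced matrix norm `‖A‖_N = sup {N (A x) : N x = 1}`. -/
noncomputable def inducedNorm {m : ℕ} (N : (Fin m → ℝ) → ℝ)
    (A : Matrix (Fin m) (Fin m) ℝ) : ℝ :=
  sSup {r | ∃ x, N x = 1 ∧ r = N (A.mulVec x)}

/-- The logarithmic norm `μ_N(A) = lim_{h→0⁺} (‖I + hA‖_N − 1)/h`. -/
noncomputable def logNorm {m : ℕ} (N : (Fin m → ℝ) → ℝ)
    (A : Matrix (Fin m) (Fin m) ℝ) : ℝ :=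
  limUnder (𝓝[>] (0:ℝ)) (fun h : ℝ => (inducedNorm N (1 + h • A) - 1) / h)

/-! The logarithmic norm only sees the induced norms `‖I + hA‖`, and `(I + hA)ᵀ = I + hAᵀ`, so it
suffices that `‖Aᵀ‖_{N⋆} = ‖A‖_N`. The bound `≤` is the pairing `y ⬝ᵥ A x ≤ N⋆(y) N(A x)`; for `≥`,
Hahn–Banach gives for each `x` a `y` with `N⋆(y) ≤ 1` and `y ⬝ᵥ A x = N(A x)`. Thus
`μ_{N⋆}(Aᵀ) = μ_N(A)`, and since `t ↦ T - t` maps `[0, T]` onto itself the two conditions agree. -/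

section

variable {m : ℕ} {N : (Fin m → ℝ) → ℝ}

-- Indexed by the proof `hN`, so that the normed-space structure built from it can be an instance.
def WithNorm (_hN : IsNorm N) : Type := Fin m → ℝ

namespace WithNorm

variable (hN : IsNorm N)

instance : AddCommGroup (WithNorm hN) := Pi.addCommGroup
instance : Module ℝ (WithNorm hN) := Pi.module _ _ _
instance : Norm (WithNorm hN) := ⟨N⟩

theorem normedSpaceCore : NormedSpace.Core ℝ (WithNorm hN) where
  norm_nonneg := hN.nonneg
  norm_smul := hN.smul
  norm_triangle := hN.triangle
  norm_eq_zero_iff := hN.eq_zero_iff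

noncomputable instance : NormedAddCommGroup (WithNorm hN) := .ofCore (normedSpaceCore hN)
noncomputable instance : NormedSpace ℝ (WithNorm hN) := .ofCore (normedSpaceCore hN)
instance : FiniteDimensional ℝ (WithNorm hN) :=
  inferInstanceAs (FiniteDimensional ℝ (Fin m → ℝ))

noncomputable def toDual : (Fin m → ℝ) ≃ₗ[ℝ] StrongDual ℝ (WithNorm hN) :=
  (dotProductEquiv ℝ (Fin m)).trans (LinearMap.toContinuousLinearMap (E := WithNorm hN))

noncomputable def toCLM (A : Matrix (Fin m) (Fin m) ℝ) : WithNorm hN →L[ℝ] WithNorm hN :=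
  LinearMap.toContinuousLinearMap A.mulVecLin

end WithNorm

theorem isNorm_norm_linearEquiv {E : Type*} [NormedAddCommGroup E] [NormedSpace ℝ E]
    (e : (Fin m → ℝ) ≃ₗ[ℝ] E) : IsNorm fun x => ‖e x‖ where
  nonneg _ := norm_nonneg _
  eq_zero_iff _ := by rw [norm_eq_zero, e.map_eq_zero_iff]
  smul a x := by rw [e.map_smul, norm_smul, Real.norm_eq_abs]
  triangle x y := by rw [e.map_add]; exact norm_add_le _ _

theorem dualNorm_le {y : Fin m → ℝ} {C : ℝ} (hC : 0 ≤ C) (h : ∀ x, y ⬝ᵥ x ≤ C * N x) :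
    dualNorm N y ≤ C :=
  Real.sSup_le (by rintro _ ⟨x, hx, rfl⟩; exact (h x).trans (mul_le_of_le_one_right hC hx)) hC

namespace IsNorm

theorem dualNorm_eq_norm_toDual (hN : IsNorm N) (y : Fin m → ℝ) :
    dualNorm N y = ‖WithNorm.toDual hN y‖ := by
  set g := WithNorm.toDual hN y
  have hle_norm : ∀ x : WithNorm hN, ‖x‖ ≤ 1 → y ⬝ᵥ x ≤ ‖g‖ := fun x hx =>
    calc y ⬝ᵥ x ≤ ‖g x‖ := le_abs_self _
      _ ≤ ‖g‖ * ‖x‖ := g.le_opNorm x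
      _ ≤ ‖g‖ := mul_le_of_le_one_right (norm_nonneg g) hx
  have hle_dual : ∀ x : WithNorm hN, ‖x‖ ≤ 1 → y ⬝ᵥ x ≤ dualNorm N y := fun x hx =>
    le_csSup ⟨‖g‖, by rintro _ ⟨x, hx, rfl⟩; exact hle_norm x hx⟩ ⟨x, hx, rfl⟩
  refine le_antisymm (csSup_le ⟨_, 0, (hN.eq_zero_iff 0).2 rfl ▸ zero_le_one, rfl⟩ ?_) ?_
  · rintro _ ⟨x, hx, rfl⟩
    exact hle_norm x hx
  · have hnonneg : 0 ≤ dualNorm N y :=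
      (dotProduct_zero y).symm.trans_le (hle_dual 0 (norm_zero.trans_le zero_le_one))
    refine g.opNorm_le_of_unit_norm hnonneg fun x hx => abs_le.2 ⟨neg_le.2 ?_, hle_dual x hx.le⟩
    exact (dotProduct_neg y x).symm.trans_le (hle_dual (-x) (by rw [norm_neg, hx]))

theorem dotProduct_le_dualNorm_mul (hN : IsNorm N) (y x : Fin m → ℝ) :
    y ⬝ᵥ x ≤ dualNorm N y * N x := by
  rw [hN.dualNorm_eq_norm_toDual]
  exact (le_abs_self _).trans ((WithNorm.toDual hN y).le_opNorm x)

theorem dual (hN : IsNorm N) : IsNorm (dualNorm N) := by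
  rw [funext hN.dualNorm_eq_norm_toDual]
  exact isNorm_norm_linearEquiv (WithNorm.toDual hN)

theorem exists_dualNorm_le_one_dotProduct_eq (hN : IsNorm N) (x : Fin m → ℝ) :
    ∃ y, dualNorm N y ≤ 1 ∧ y ⬝ᵥ x = N x := by
  obtain ⟨g, hg, hgx⟩ := exists_dual_vector'' (E := WithNorm hN) ℝ x
  obtain ⟨y, rfl⟩ := (WithNorm.toDual hN).surjective g
  exact ⟨y, hN.dualNorm_eq_norm_toDual y ▸ hg, hgx⟩

theorem inducedNorm_eq_norm_toCLM (hN : IsNorm N) (A : Matrix (Fin m) (Fin m) ℝ) :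
    inducedNorm N A = ‖WithNorm.toCLM hN A‖ := by
  rw [inducedNorm, ← ContinuousLinearMap.sSup_sphere_eq_norm]
  congr 1
  ext r
  simp only [Set.mem_ofPred_eq, Set.mem_image, mem_sphere_zero_iff_norm]
  exact ⟨fun ⟨x, hx, hr⟩ => ⟨x, hx, hr.symm⟩, fun ⟨x, hx, hr⟩ => ⟨x, hx, hr.symm⟩⟩

theorem inducedNorm_nonneg (hN : IsNorm N) (A : Matrix (Fin m) (Fin m) ℝ) :
    0 ≤ inducedNorm N A :=
  hN.inducedNorm_eq_norm_toCLM A ▸ norm_nonneg _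

theorem apply_mulVec_le (hN : IsNorm N) (A : Matrix (Fin m) (Fin m) ℝ) (x : Fin m → ℝ) :
    N (A *ᵥ x) ≤ inducedNorm N A * N x :=
  hN.inducedNorm_eq_norm_toCLM A ▸ (WithNorm.toCLM hN A).le_opNorm x

theorem inducedNorm_le (hN : IsNorm N) {A : Matrix (Fin m) (Fin m) ℝ} {C : ℝ} (hC : 0 ≤ C)
    (h : ∀ x, N (A *ᵥ x) ≤ C * N x) : inducedNorm N A ≤ C :=
  hN.inducedNorm_eq_norm_toCLM A ▸ (WithNorm.toCLM hN A).opNorm_le_bound hC h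

theorem inducedNorm_dualNorm_transpose (hN : IsNorm N) (A : Matrix (Fin m) (Fin m) ℝ) :
    inducedNorm (dualNorm N) Aᵀ = inducedNorm N A := by
  have hA := hN.inducedNorm_nonneg A
  refine le_antisymm (hN.dual.inducedNorm_le hA fun y => ?_) (hN.inducedNorm_le
    (hN.dual.inducedNorm_nonneg Aᵀ) fun x => ?_)
  · refine dualNorm_le (mul_nonneg hA (hN.dual.nonneg y)) fun x => ?_
    calc Aᵀ *ᵥ y ⬝ᵥ x = y ⬝ᵥ A *ᵥ x := by rw [mulVec_transpose, dotProduct_mulVec]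
      _ ≤ dualNorm N y * N (A *ᵥ x) := hN.dotProduct_le_dualNorm_mul y _
      _ ≤ dualNorm N y * (inducedNorm N A * N x) :=
        mul_le_mul_of_nonneg_left (hN.apply_mulVec_le A x) (hN.dual.nonneg y)
      _ = inducedNorm N A * dualNorm N y * N x := by ring
  · obtain ⟨y, hy, hyx⟩ := hN.exists_dualNorm_le_one_dotProduct_eq (A *ᵥ x)
    calc N (A *ᵥ x) = Aᵀ *ᵥ y ⬝ᵥ x := by rw [← hyx, mulVec_transpose, dotProduct_mulVec]
      _ ≤ dualNorm N (Aᵀ *ᵥ y) * N x := hN.dotProduct_le_dualNorm_mul _ x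
      _ ≤ inducedNorm (dualNorm N) Aᵀ * dualNorm N y * N x := by
        gcongr
        · exact hN.nonneg x
        · exact hN.dual.apply_mulVec_le Aᵀ y
      _ ≤ inducedNorm (dualNorm N) Aᵀ * N x := by
        gcongr
        · exact hN.nonneg x
        · exact mul_le_of_le_one_right (hN.dual.inducedNorm_nonneg Aᵀ) hy

theorem logNorm_dualNorm_transpose (hN : IsNorm N) (A : Matrix (Fin m) (Fin m) ℝ) :
    logNorm (dualNorm N) Aᵀ = logNorm N A := by
  have hI (h : ℝ) : (1 : Matrix (Fin m) (Fin m) ℝ) + h • Aᵀ = (1 + h • A)ᵀ := by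
    rw [transpose_add, transpose_one, transpose_smul]
  simp only [logNorm, hI, hN.inducedNorm_dualNorm_transpose]

end IsNorm

end

theorem dual_contractivity_state_costate_general
    {n k : ℕ} (T c : ℝ)
    (N : (Fin n → ℝ) → ℝ) (hN : IsNorm N)
    (U : Set (Fin k → ℝ))
    (Df : ℝ → (Fin n → ℝ) → (Fin k → ℝ) → Matrix (Fin n) (Fin n) ℝ) :
    (∀ t ∈ Icc (0:ℝ) T, ∀ (x : Fin n → ℝ), ∀ u ∈ U, logNorm N (Df t x u) ≤ -c) ↔
      (∀ (x : ℝ → (Fin n → ℝ)) (u : ℝ → (Fin k → ℝ)), (∀ t, u t ∈ U) →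
        ∀ t ∈ Icc (0:ℝ) T,
          logNorm (dualNorm N) (Df (T - t) (x (T - t)) (u (T - t)))ᵀ ≤ -c) := by
  have hreflect {t : ℝ} (ht : t ∈ Icc 0 T) : T - t ∈ Icc 0 T :=
    ⟨by linarith [ht.2], by linarith [ht.1]⟩
  simp only [hN.logNorm_dualNorm_transpose]
  constructor
  · intro h x u hu t ht
    exact h _ (hreflect ht) _ _ (hu _)
  · intro h t ht x u hu
    simpa using h (fun _ => x) (fun _ => u) (fun _ => hu) (T - t) (hreflect ht)

/-- **Dual contractivity of state and time-reversed costate** (Theorem 2).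
For `c > 0` and `T > 0`, the following are equivalent:
(1) `μ_N(D_x f(t,x,u)) ≤ −c` for all `t ∈ [0,T]`, `x ∈ ℝⁿ`, `u ∈ U`, i.e. the
system `ẋ = f(t,x,u)` is strongly infinitesimally contracting with rate `c`
with respect to `N`;
(2) for every nominal trajectory `x : [0,T] → ℝⁿ` and input `u : [0,T] → U`, the
time-reversed adjoint system
`Λ̇(t) = D_x f(T−t, x(T−t), u(T−t))ᵀ Λ(t) − v(T−t)` — whose Jacobian with respect
to `Λ` is `D_x f(T−t, x(T−t), u(T−t))ᵀ` — is strongly infinitesimally contracting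
with rate `c` with respect to the dual norm `N⋆` at every `t ∈ [0,T]`. -/
theorem dual_contractivity_state_costate
    {n k : ℕ} (T c : ℝ) (hT : 0 < T) (hc : 0 < c)
    (N : (Fin n → ℝ) → ℝ) (hN : IsNorm N)
    (U : Set (Fin k → ℝ))
    (f : ℝ → (Fin n → ℝ) → (Fin k → ℝ) → (Fin n → ℝ))
    (hf_cont : Continuous fun p : ℝ × (Fin n → ℝ) × (Fin k → ℝ) => f p.1 p.2.1 p.2.2)
    (Df : ℝ → (Fin n → ℝ) → (Fin k → ℝ) → Matrix (Fin n) (Fin n) ℝ)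
    (hDf : ∀ t x u, HasFDerivAt (fun y => f t y u)
      (Df t x u).mulVecLin.toContinuousLinearMap x) :
    (∀ t ∈ Icc (0:ℝ) T, ∀ (x : Fin n → ℝ), ∀ u ∈ U, logNorm N (Df t x u) ≤ -c) ↔
      (∀ (x : ℝ → (Fin n → ℝ)) (u : ℝ → (Fin k → ℝ)), (∀ t, u t ∈ U) →
        ∀ t ∈ Icc (0:ℝ) T,
          logNorm (dualNorm N) (Df (T - t) (x (T - t)) (u (T - t)))ᵀ ≤ -c) :=
  dual_contractivity_state_costate_general T c N hN U Df
end

section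
/- Let c > 0, T > 0, 0 ≤ t ≤ T, and let g : [0,T] → ℝ≥0 be integrable. Then ∫_t^T ∫_0^τ e^{−c(τ−t)} e^{−c(τ−τ′)} g(τ′) dτ′ dτ = (sinh(c(T−t))/c) ∫_0^t e^{−c(T−τ)} g(τ) dτ + (e^{−c(T−t)}/c) ∫_t^T sinh(c(T−τ)) g(τ) dτ. -/
/-!
Since `e^{-c(τ-t)} e^{-c(τ-τ')} = e^{ct - 2cτ} e^{cτ'}`, the left side is
`∫_t^T f(τ) ∫_0^τ h` with `f(τ) = e^{ct - 2cτ}` and `h(τ') = e^{cτ'} g(τ')`. Splitting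
`∫_0^τ = ∫_0^t + ∫_t^τ` and exchanging the order of integration over the triangle
`t < τ' ≤ τ ≤ T` gives `(∫_t^T f) (∫_0^t h) + ∫_t^T (∫_{τ'}^T f) h(τ') dτ'`, and the inner
integrals are explicit: `∫_s^T e^{-2cτ} dτ = e^{-c(s+T)} sinh(c(T-s)) / c`.
-/

open Set MeasureTheory intervalIntegral

section Dirichlet

variable {𝕜 : Type*} [RCLike 𝕜] {f h : ℝ → 𝕜}

theorem integral_mul_primitive_eq {a b : ℝ} (hab : a ≤ b)
    (hf : IntervalIntegrable f volume a b) (hh : IntervalIntegrable h volume a b) :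
    ∫ τ in a..b, f τ * ∫ s in a..τ, h s = ∫ s in a..b, (∫ τ in s..b, f τ) * h s := by
  rw [intervalIntegrable_iff_integrableOn_Ioc_of_le hab] at hf hh
  set K : ℝ × ℝ → 𝕜 := {p | p.2 ≤ p.1}.indicator fun p => f p.1 * h p.2
  have hK : Integrable K ((volume.restrict (Ioc a b)).prod (volume.restrict (Ioc a b))) :=
    (hf.mul_prod hh).indicator (measurableSet_le measurable_snd measurable_fst)
  have hleft : ∀ τ ∈ Ioc a b, ∫ s in Ioc a b, K (τ, s) = f τ * ∫ s in a..τ, h s := by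
    intro τ hτ
    have hKτ : ∀ s, K (τ, s) = (Iic τ).indicator (fun s => f τ * h s) s := fun s => by
      by_cases hs : s ≤ τ <;> simp [K, hs]
    simp_rw [hKτ]
    rw [setIntegral_indicator measurableSet_Iic, Ioc_inter_Iic, min_eq_right hτ.2,
      integral_of_le hτ.1.le, MeasureTheory.integral_const_mul]
  have hright : ∀ s ∈ Ioc a b, ∫ τ in Ioc a b, K (τ, s) = (∫ τ in s..b, f τ) * h s := by
    intro s hs
    have hKs : ∀ τ, K (τ, s) = (Ici s).indicator (fun τ => f τ * h s) τ := fun τ => by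
      by_cases hτ : s ≤ τ <;> simp [K, hτ]
    have hIcc : Ioc a b ∩ Ici s = Icc s b := by
      ext τ
      simp only [mem_inter_iff, mem_Ioc, mem_Ici, mem_Icc]
      exact ⟨fun ⟨⟨_, hτb⟩, hsτ⟩ => ⟨hsτ, hτb⟩,
        fun ⟨hsτ, hτb⟩ => ⟨⟨hs.1.trans_le hsτ, hτb⟩, hsτ⟩⟩
    simp_rw [hKs]
    rw [setIntegral_indicator measurableSet_Ici, hIcc, integral_Icc_eq_integral_Ioc,
      integral_of_le hs.2, MeasureTheory.integral_mul_const]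
  rw [integral_of_le hab, integral_of_le hab, ← setIntegral_congr_fun measurableSet_Ioc hleft,
    ← setIntegral_congr_fun measurableSet_Ioc hright]
  exact integral_integral_swap hK

theorem integral_mul_primitive_eq_add {l a b : ℝ} (hla : l ≤ a) (hab : a ≤ b)
    (hf : IntervalIntegrable f volume a b) (hh : IntervalIntegrable h volume l b) :
    ∫ τ in a..b, f τ * ∫ s in l..τ, h s =
      (∫ τ in a..b, f τ) * (∫ s in l..a, h s) + ∫ s in a..b, (∫ τ in s..b, f τ) * h s := by
  have hh_ab : IntervalIntegrable h volume a b :=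
    hh.mono_set (uIcc_subset_uIcc_right (mem_uIcc_of_le hla hab))
  have hsplit : ∀ τ ∈ uIcc a b,
      f τ * ∫ s in l..τ, h s = f τ * (∫ s in l..a, h s) + f τ * ∫ s in a..τ, h s := by
    intro τ hτ
    rw [← mul_add, integral_add_adjacent_intervals
      (hh.mono_set (uIcc_subset_uIcc_left (mem_uIcc_of_le hla hab)))
      (hh_ab.mono_set (uIcc_subset_uIcc_left hτ))]
  rw [integral_congr hsplit, integral_add (hf.mul_const _)
      (hf.mul_continuousOn (continuousOn_primitive_interval' hh_ab left_mem_uIcc)),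
    intervalIntegral.integral_mul_const, integral_mul_primitive_eq hab hf hh_ab]

end Dirichlet

theorem integral_exp_neg_two_mul {c : ℝ} (hc : c ≠ 0) (a b : ℝ) :
    ∫ τ in a..b, Real.exp (-2 * c * τ) =
      Real.exp (-c * (a + b)) * (Real.sinh (c * (b - a)) / c) := by
  rw [integral_comp_mul_left Real.exp (by simpa using hc), integral_exp, Real.sinh_eq,
    smul_eq_mul, mul_div_assoc', mul_div_assoc', mul_sub (Real.exp _), ← Real.exp_add,
    ← Real.exp_add]
  field_simp
  ring_nf

theorem double_integral_identity_general
    (c T t : ℝ) (hc : 0 < c) (ht0 : 0 ≤ t) (htT : t ≤ T)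
    (g : ℝ → ℝ)
    (hg_int : IntegrableOn g (Icc (0:ℝ) T)) :
    (∫ τ in t..T, ∫ τ' in (0:ℝ)..τ,
        Real.exp (-c * (τ - t)) * Real.exp (-c * (τ - τ')) * g τ') =
      (Real.sinh (c * (T - t)) / c) * (∫ τ in (0:ℝ)..t, Real.exp (-c * (T - τ)) * g τ) +
      (Real.exp (-c * (T - t)) / c) * (∫ τ in t..T, Real.sinh (c * (T - τ)) * g τ) := by
  have hg : IntervalIntegrable (fun s => Real.exp (c * s) * g s) volume 0 T :=
    ((intervalIntegrable_iff_integrableOn_Icc_of_le (ht0.trans htT)).mpr hg_int).continuousOn_mul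
      (by fun_prop : Continuous fun s => Real.exp (c * s)).continuousOn
  calc (∫ τ in t..T, ∫ τ' in (0:ℝ)..τ,
        Real.exp (-c * (τ - t)) * Real.exp (-c * (τ - τ')) * g τ')
      = ∫ τ in t..T, (Real.exp (c * t) * Real.exp (-2 * c * τ)) *
          ∫ s in (0:ℝ)..τ, Real.exp (c * s) * g s := by
        refine integral_congr fun τ _ => ?_
        rw [← intervalIntegral.integral_const_mul]
        refine integral_congr fun s _ => ?_
        simp only [← mul_assoc, ← Real.exp_add]
        ring_nf
    _ = _ := by
        rw [integral_mul_primitive_eq_add ht0 htT (Continuous.intervalIntegrable (by fun_prop) _ _)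
          hg]
        simp only [intervalIntegral.integral_const_mul, integral_exp_neg_two_mul hc.ne']
        congr 1
        · rw [← intervalIntegral.integral_const_mul, ← intervalIntegral.integral_const_mul]
          refine integral_congr fun s _ => ?_
          have e : Real.exp (c * t) * Real.exp (-c * (t + T)) * Real.exp (c * s) =
              Real.exp (-c * (T - s)) := by
            rw [← Real.exp_add, ← Real.exp_add]; ring_nf
          linear_combination (Real.sinh (c * (T - t)) / c * g s) * e
        · rw [← intervalIntegral.integral_const_mul]
          refine integral_congr fun s _ => ?_
          have e : Real.exp (c * t) * Real.exp (-c * (s + T)) * Real.exp (c * s) =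
              Real.exp (-c * (T - t)) := by
            rw [← Real.exp_add, ← Real.exp_add]; ring_nf
          linear_combination (Real.sinh (c * (T - s)) / c * g s) * e

/-- **Exchange-of-integration identity** (used in the proof of Theorem 3).
For `c > 0`, `T > 0`, `0 ≤ t ≤ T`, and `g : [0,T] → ℝ≥0` integrable,
`∫_t^T ∫_0^τ e^{−c(τ−t)} e^{−c(τ−τ′)} g(τ′) dτ′ dτ
  = (sinh(c(T−t))/c) ∫_0^t e^{−c(T−τ)} g(τ) dτ
  + (e^{−c(T−t)}/c) ∫_t^T sinh(c(T−τ)) g(τ) dτ`. -/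
theorem double_integral_identity
    (c T t : ℝ) (hc : 0 < c) (hT : 0 < T) (ht0 : 0 ≤ t) (htT : t ≤ T)
    (g : ℝ → ℝ) (hg_nonneg : ∀ τ ∈ Icc (0:ℝ) T, 0 ≤ g τ)
    (hg_int : IntegrableOn g (Icc (0:ℝ) T)) :
    (∫ τ in t..T, ∫ τ' in (0:ℝ)..τ,
        Real.exp (-c * (τ - t)) * Real.exp (-c * (τ - τ')) * g τ') =
      (Real.sinh (c * (T - t)) / c) * (∫ τ in (0:ℝ)..t, Real.exp (-c * (T - τ)) * g τ) +
      (Real.exp (-c * (T - t)) / c) * (∫ τ in t..T, Real.sinh (c * (T - τ)) * g τ) :=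
  double_integral_identity_general c T t hc ht0 htT g hg_int
end

section
/- Let c > 0, T > 0, and 0 ≤ t ≤ T. Then (sinh(c(T−t))/c) ∫_0^t e^{−c(T−τ)} dτ + (e^{−c(T−t)}/c) ∫_t^T sinh(c(T−τ)) dτ ≤ κ², where κ = c⁻¹(1 − e^{−cT}). -/
/-! With `s = c (T - t)` and `x = e^{-cT}` both integrals are elementary, and `c²` times the
left-hand side collapses to `1 - x sinh s - e^{-s}` because `e^{-s} (sinh s + cosh s) = 1`.
The gap to `(1 - x)²` is then, with `u = e^{-s}`,
`((2 - x) (u - x)² + x (1 - x)²) / (2u) ≥ 0`, as `0 ≤ x ≤ 1`. -/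

open Real intervalIntegral

theorem integral_exp_neg_mul_sub {c : ℝ} (hc : c ≠ 0) (T a b : ℝ) :
    ∫ τ in a..b, exp (-c * (T - τ)) = (exp (-c * (T - b)) - exp (-c * (T - a))) / c := by
  have hderiv (τ : ℝ) : HasDerivAt (fun τ => exp (-c * (T - τ)) / c) (exp (-c * (T - τ))) τ :=
    ((((hasDerivAt_id' τ).const_sub T).const_mul (-c)).exp.div_const c).congr_deriv
      (by field_simp)
  rw [integral_eq_sub_of_hasDerivAt (fun τ _ => hderiv τ)
    ((by fun_prop : Continuous _).intervalIntegrable _ _), sub_div]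

theorem integral_sinh_mul_sub {c : ℝ} (hc : c ≠ 0) (T a b : ℝ) :
    ∫ τ in a..b, sinh (c * (T - τ)) = (cosh (c * (T - a)) - cosh (c * (T - b))) / c := by
  have hderiv (τ : ℝ) :
      HasDerivAt (fun τ => -cosh (c * (T - τ)) / c) (sinh (c * (T - τ))) τ :=
    ((((hasDerivAt_id' τ).const_sub T).const_mul c).cosh.neg.div_const c).congr_deriv
      (by field_simp)
  rw [integral_eq_sub_of_hasDerivAt (fun τ _ => hderiv τ)
    ((by fun_prop : Continuous _).intervalIntegrable _ _)]
  ring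

theorem mul_two_sub_le_mul_sinh_add_exp_neg {x : ℝ} (hx0 : 0 ≤ x) (hx2 : x ≤ 2) (s : ℝ) :
    x * (2 - x) ≤ x * sinh s + exp (-s) := by
  set u := exp (-s)
  have hu : 0 < u := exp_pos _
  have hsinh : sinh s = (u⁻¹ - u) / 2 := by
    rw [sinh_eq, ← exp_neg, neg_neg]
  have key :
      x * sinh s + u - x * (2 - x) = ((2 - x) * (u - x) ^ 2 + x * (1 - x) ^ 2) / (2 * u) := by
    rw [hsinh]
    field_simp
    ring
  have h2x : 0 ≤ 2 - x := by linarith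
  have : 0 ≤ ((2 - x) * (u - x) ^ 2 + x * (1 - x) ^ 2) / (2 * u) := by positivity
  linarith

theorem sinh_mul_exp_neg_sub_add_exp_neg_mul_cosh_sub_one (x s : ℝ) :
    sinh s * (exp (-s) - x) + exp (-s) * (cosh s - 1) = 1 - x * sinh s - exp (-s) := by
  have h : exp (-s) * (sinh s + cosh s) = 1 := by
    rw [sinh_add_cosh, ← exp_add, neg_add_cancel, exp_zero]
  linear_combination h

theorem kernel_bound_general
    (c T t : ℝ) (hc : 0 < c) (hT : 0 < T) :
    (Real.sinh (c * (T - t)) / c) * (∫ τ in (0:ℝ)..t, Real.exp (-c * (T - τ))) +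
      (Real.exp (-c * (T - t)) / c) * (∫ τ in t..T, Real.sinh (c * (T - τ))) ≤
      (c⁻¹ * (1 - Real.exp (-(c * T))))^2 := by
  rw [integral_exp_neg_mul_sub hc.ne', integral_sinh_mul_sub hc.ne']
  set s := c * (T - t)
  set x := exp (-(c * T))
  have hx1 : x ≤ 1 := exp_le_one_iff.mpr (neg_nonpos.mpr (mul_pos hc hT).le)
  have hbound := mul_two_sub_le_mul_sinh_add_exp_neg (exp_pos _).le (by linarith) s
  have hs : -c * (T - t) = -s := by ring
  have hx : -c * (T - 0) = -(c * T) := by ring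
  rw [hs, hx, sub_self, mul_zero, cosh_zero]
  calc sinh s / c * ((exp (-s) - x) / c) + exp (-s) / c * ((cosh s - 1) / c)
      = (1 - x * sinh s - exp (-s)) / c ^ 2 := by
        rw [← sinh_mul_exp_neg_sub_add_exp_neg_mul_cosh_sub_one]; ring
    _ ≤ (1 - x) ^ 2 / c ^ 2 := by gcongr; linarith
    _ = (c⁻¹ * (1 - x)) ^ 2 := by ring

/-- **Kernel bound** (used in the proof of Corollary 1).  For `c > 0`, `T > 0`, and
`0 ≤ t ≤ T`,
`(sinh(c(T−t))/c) ∫_0^t e^{−c(T−τ)} dτ + (e^{−c(T−t)}/c) ∫_t^T sinh(c(T−τ)) dτ ≤ κ²`,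
where `κ = c⁻¹ (1 − e^{−cT})`. -/
theorem kernel_bound
    (c T t : ℝ) (hc : 0 < c) (hT : 0 < T) (ht0 : 0 ≤ t) (htT : t ≤ T) :
    (Real.sinh (c * (T - t)) / c) * (∫ τ in (0:ℝ)..t, Real.exp (-c * (T - τ))) +
      (Real.exp (-c * (T - t)) / c) * (∫ τ in t..T, Real.sinh (c * (T - τ))) ≤
      (c⁻¹ * (1 - Real.exp (-(c * T))))^2 :=
  kernel_bound_general c T t hc hT
end
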